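/- arXiv:0906.0821 — 2 statements merged into one kernel-verified Lean document; each statement's English description precedes it below -/
import Mathlib

section
/- Let κ, K ∈ ℝ with κ² + K ≤ 0 and K ≠ 0. If (ξ_T, ξ_N, a):ℝ→ℝ³ solves ξ_T′ = κ ξ_N, ξ_N′ = −κ ξ_T − a, a′ = K ξ_N and is periodic with some period L > 0, then (ξ_T, ξ_N, a) is a constant multiple of (1, 0, −κ). -/
/-!
Write `g = ξN′ = -κ ξT - a`, so that `g′ = -(κ² + K) ξN`. Then `(ξN g)′ = g² - (κ² + K) ξN² ≥ 0`,
and once `g = 0` also `(κ ξT ξN)′ = κ² ξN² ≥ 0`. A periodic function with nonnegative derivative is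
monotone, hence constant, so both derivatives vanish identically. Adding them gives `-K ξN² = 0`,
so `ξN = 0` as `K ≠ 0`; then `ξT` is constant and `a = -κ ξT`.
-/

theorem Function.Periodic.eq_of_monotone {α β : Type*} [Field α] [LinearOrder α]
    [IsStrictOrderedRing α] [Archimedean α] [PartialOrder β] {f : α → β} {c : α}
    (hper : Function.Periodic f c) (hc : 0 < c) (hf : Monotone f) (x y : α) : f x = f y := by
  wlog hxy : x ≤ y generalizing x y
  · exact (this y x (le_of_not_ge hxy)).symm
  obtain ⟨n, hn⟩ := exists_nat_gt ((y - x) / c)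
  have hy : y ≤ x + n * c := by
    rw [div_lt_iff₀ hc] at hn
    linarith
  exact le_antisymm (hf hxy) (hper.nat_mul n x ▸ hf hy)

theorem Function.Periodic.hasDerivAt_eq_zero_of_nonneg {f f' : ℝ → ℝ} {c : ℝ}
    (hper : Function.Periodic f c) (hc : 0 < c) (hf : ∀ t, HasDerivAt f (f' t) t)
    (hf' : ∀ t, 0 ≤ f' t) (t : ℝ) : f' t = 0 := by
  have hconst : f = fun _ => f 0 :=
    funext fun x => hper.eq_of_monotone hc (monotone_of_hasDerivAt_nonneg hf hf') x 0
  have hft := hf t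
  rw [hconst] at hft
  exact hft.unique (hasDerivAt_const t (f 0))

/-- when `κ² + K ≤ 0` and `K ≠ 0`, every periodic solution of the
Killing transport system `ξ_T′ = κ ξ_N`, `ξ_N′ = −κ ξ_T − a`, `a′ = K ξ_N`
is a constant multiple of `(1, 0, −κ)`. -/
theorem killing_transport_periodic_trivial (κ K : ℝ)
    (hK : κ ^ 2 + K ≤ 0) (hK0 : K ≠ 0)
    (ξT ξN a : ℝ → ℝ)
    (hT : ∀ t, HasDerivAt ξT (κ * ξN t) t)
    (hN : ∀ t, HasDerivAt ξN (-κ * ξT t - a t) t)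
    (ha : ∀ t, HasDerivAt a (K * ξN t) t)
    (L : ℝ) (hL : 0 < L)
    (hper : ∀ t, ξT (t + L) = ξT t ∧ ξN (t + L) = ξN t ∧ a (t + L) = a t) :
    ∃ c : ℝ, ∀ t, ξT t = c * 1 ∧ ξN t = c * 0 ∧ a t = c * (-κ) := by
  set g := fun t => -κ * ξT t - a t with hg_def
  have hg : ∀ t, HasDerivAt g (-(κ ^ 2 + K) * ξN t) t := fun t =>
    (((hT t).const_mul (-κ)).sub (ha t)).congr_deriv (by ring)
  have hg_sq : ∀ t, g t ^ 2 + -(κ ^ 2 + K) * ξN t ^ 2 = 0 :=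
    Function.Periodic.hasDerivAt_eq_zero_of_nonneg (f := fun t => ξN t * g t)
      (fun t => by simp only [hg_def, (hper t).1, (hper t).2.1, (hper t).2.2]) hL
      (fun t => ((hN t).mul (hg t)).congr_deriv (by ring))
      (fun t => add_nonneg (sq_nonneg _) (mul_nonneg (by linarith) (sq_nonneg _)))
  have hg0 : ∀ t, g t = 0 := fun t => by
    nlinarith [hg_sq t, sq_nonneg (g t), sq_nonneg (ξN t)]
  have hκN : ∀ t, κ ^ 2 * ξN t ^ 2 = 0 :=
    Function.Periodic.hasDerivAt_eq_zero_of_nonneg (f := fun t => κ * ξT t * ξN t)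
      (fun t => by simp only [(hper t).1, (hper t).2.1]) hL
      (fun t => (((hT t).const_mul κ).mul (hN t)).congr_deriv
        (by linear_combination κ * ξT t * hg0 t))
      (fun t => by positivity)
  have hN0 : ∀ t, ξN t = 0 := fun t => by
    have hKξN : -K * ξN t ^ 2 = 0 := by linear_combination hg_sq t - g t * hg0 t + hκN t
    exact pow_eq_zero_iff two_ne_zero |>.1 <| (mul_eq_zero.1 hKξN).resolve_left (neg_ne_zero.2 hK0)
  have hTconst : ∀ t, ξT t = ξT 0 := fun t =>
    is_const_of_deriv_eq_zero (fun x => (hT x).differentiableAt)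
      (fun x => by rw [(hT x).deriv, hN0 x, mul_zero]) t 0
  refine ⟨ξT 0, fun t => ⟨by rw [hTconst t, mul_one], by rw [hN0 t, mul_zero], ?_⟩⟩
  linear_combination -(hg0 t) - κ * hTconst t
end

section
/- Consider the 3×3 matrices Q(a,b,c) = [[0,−c,b],[c,0,−a],[−kb,ka,0]] for real parameters a,b,c and two distinct real values k (i.e., allow k to take two different values k₁ ≠ k₂ in different matrices). The Lie algebra generated (under matrix commutator) by all such matrices is all of sl(3,ℝ). -/
attribute [local instance 100] LieRing.ofAssociativeRing

/-- The coefficient matrix of the 2-dimensional Killing transport system with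
frame data `a, b, c` (for `ω¹(γ′), ω²(γ′), ω¹₂(γ′)`) and Gaussian curvature `k`. -/
def Qmat (a b c k : ℝ) : Matrix (Fin 3) (Fin 3) ℝ :=
  !![0, -c, b;
     c, 0, -a;
     -k * b, k * a, 0]

/-!
`Qmat a b c k` is linear in `(a, b, c)` and affine in `k`: with `Eᵢⱼ` the elementary matrices,
`Qmat 1 0 0 k = k E₂₁ - E₁₂` and `Qmat 0 (-1) 0 k = k E₂₀ - E₀₂`. Two distinct values of `k`
therefore separate these into `E₂₁, E₁₂, E₂₀, E₀₂`, and the brackets `⁅E₀₂, E₂₁⁆ = E₀₁`,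
`⁅E₁₂, E₂₀⁆ = E₁₀` supply the remaining off-diagonal elementary matrices. A Lie subalgebra of
`𝔤𝔩ₙ` containing all off-diagonal `Eᵢⱼ` contains `𝔰𝔩ₙ`, since `⁅Eᵢⱼ, Eⱼᵢ⁆ = Eᵢᵢ - Eⱼⱼ`.
-/

open Matrix

theorem mem_and_mem_of_smul_sub_mem {K M S : Type*} [Field K] [AddCommGroup M] [Module K M]
    [SetLike S M] [AddSubgroupClass S M] [SMulMemClass S K M] {s : S} {k₁ k₂ : K} {e f : M}
    (hk : k₁ ≠ k₂) (h₁ : k₁ • e - f ∈ s) (h₂ : k₂ • e - f ∈ s) : e ∈ s ∧ f ∈ s := by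
  have he : e ∈ s := by
    have : e = (k₁ - k₂)⁻¹ • ((k₁ • e - f) - (k₂ • e - f)) := by
      rw [sub_sub_sub_cancel_right, ← sub_smul, smul_smul, inv_mul_cancel₀ (sub_ne_zero.mpr hk),
        one_smul]
    exact this ▸ SMulMemClass.smul_mem _ (sub_mem h₁ h₂)
  refine ⟨he, ?_⟩
  simpa using sub_mem (SMulMemClass.smul_mem k₁ he) h₁

section ElementaryMatrices

variable {n : Type*} [DecidableEq n] [Fintype n]

theorem Matrix.lie_single_single {R : Type*} [Ring R] {i j k : n} (hik : i ≠ k) (a b : R) :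
    ⁅single i j a, single j k b⁆ = single i k (a * b) := by
  rw [Ring.lie_def, single_mul_single_same, single_mul_single_of_ne (h := hik.symm), sub_zero]

theorem Matrix.lie_single_single_swap {R : Type*} [Ring R] (i j : n) (a : R) :
    ⁅single i j a, single j i 1⁆ = single i i a - single j j a := by
  rw [Ring.lie_def, single_mul_single_same, single_mul_single_same, mul_one, one_mul]

theorem Matrix.eq_sum_ite_single_of_trace_eq_zero {α : Type*} [AddCommGroup α]
    {X : Matrix n n α} (hX : X.trace = 0) (i₀ : n) :
    X = ∑ i, ∑ j, if i = j then single i i (X i i) - single i₀ i₀ (X i i)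
      else single i j (X i j) :=
  calc X = ∑ i, ∑ j, single i j (X i j) - single i₀ i₀ X.trace := by
        rw [hX, single_zero, sub_zero, ← matrix_eq_sum_single]
    _ = ∑ i, ∑ j, (single i j (X i j) - if i = j then single i₀ i₀ (X i i) else 0) := by
        simp only [Finset.sum_sub_distrib, Finset.sum_ite_eq, Finset.mem_univ, if_true,
          trace, diag, ← singleAddMonoidHom_apply, map_sum]
    _ = _ := by
        refine Finset.sum_congr rfl fun i _ => Finset.sum_congr rfl fun j _ => ?_
        split_ifs with hij <;> simp [hij]

theorem LieAlgebra.SpecialLinear.sl_le_of_single_mem {R : Type*} [CommRing R]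
    (L : LieSubalgebra R (Matrix n n R)) (h : ∀ i j, i ≠ j → Matrix.single i j (1 : R) ∈ L) :
    sl n R ≤ L := by
  have hoff (i j : n) (hij : i ≠ j) (a : R) : Matrix.single i j a ∈ L := by
    simpa [smul_single] using L.smul_mem a (h i j hij)
  have hdiag (i j : n) (a : R) : Matrix.single i i a - Matrix.single j j a ∈ L := by
    by_cases hij : i = j
    · simp [hij, L.zero_mem]
    · exact lie_single_single_swap i j a ▸ L.lie_mem (hoff i j hij a) (h j i (Ne.symm hij))
  intro X hX
  rcases isEmpty_or_nonempty n with _ | ⟨⟨i₀⟩⟩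
  · simp [Subsingleton.elim X 0, L.zero_mem]
  rw [eq_sum_ite_single_of_trace_eq_zero hX i₀]
  refine L.sum_mem fun i _ => L.sum_mem fun j _ => ?_
  split_ifs with hij
  · exact hdiag i i₀ _
  · exact hoff i j hij _

end ElementaryMatrices

theorem Qmat_mem_sl (a b c k : ℝ) : Qmat a b c k ∈ LieAlgebra.SpecialLinear.sl (Fin 3) ℝ := by
  show trace (Qmat a b c k) = 0
  simp [Qmat, trace, Fin.sum_univ_three]

theorem Qmat_one_zero_zero (k : ℝ) : Qmat 1 0 0 k = k • single 2 1 1 - single 1 2 1 := by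
  ext i j; fin_cases i <;> fin_cases j <;> simp [Qmat]

theorem Qmat_zero_neg_one_zero (k : ℝ) : Qmat 0 (-1) 0 k = k • single 2 0 1 - single 0 2 1 := by
  ext i j; fin_cases i <;> fin_cases j <;> simp [Qmat]

/-- if two distinct curvature values `k₁ ≠ k₂` occur, the Lie algebra
generated by all the matrices `Qmat a b c kᵢ` is all of `sl(3, ℝ)`. -/
theorem lie_span_Qmat_eq_sl (k₁ k₂ : ℝ) (hk : k₁ ≠ k₂) :
    LieSubalgebra.lieSpan ℝ (Matrix (Fin 3) (Fin 3) ℝ)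
      {Q | ∃ a b c : ℝ, Q = Qmat a b c k₁ ∨ Q = Qmat a b c k₂} =
    LieAlgebra.SpecialLinear.sl (Fin 3) ℝ := by
  refine le_antisymm (LieSubalgebra.lieSpan_le.mpr ?_) ?_
  · rintro Q ⟨a, b, c, rfl | rfl⟩ <;> exact Qmat_mem_sl a b c _
  set L := LieSubalgebra.lieSpan ℝ (Matrix (Fin 3) (Fin 3) ℝ)
    {Q | ∃ a b c : ℝ, Q = Qmat a b c k₁ ∨ Q = Qmat a b c k₂}
  have hQ₁ (a b c : ℝ) : Qmat a b c k₁ ∈ L := LieSubalgebra.subset_lieSpan ⟨a, b, c, .inl rfl⟩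
  have hQ₂ (a b c : ℝ) : Qmat a b c k₂ ∈ L := LieSubalgebra.subset_lieSpan ⟨a, b, c, .inr rfl⟩
  obtain ⟨h21, h12⟩ := mem_and_mem_of_smul_sub_mem hk
    (Qmat_one_zero_zero k₁ ▸ hQ₁ 1 0 0) (Qmat_one_zero_zero k₂ ▸ hQ₂ 1 0 0)
  obtain ⟨h20, h02⟩ := mem_and_mem_of_smul_sub_mem hk
    (Qmat_zero_neg_one_zero k₁ ▸ hQ₁ 0 (-1) 0) (Qmat_zero_neg_one_zero k₂ ▸ hQ₂ 0 (-1) 0)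
  have h01 : single 0 1 (1 : ℝ) ∈ L := by simpa [lie_single_single] using L.lie_mem h02 h21
  have h10 : single 1 0 (1 : ℝ) ∈ L := by simpa [lie_single_single] using L.lie_mem h12 h20
  refine LieAlgebra.SpecialLinear.sl_le_of_single_mem L fun i j hij => ?_
  fin_cases i <;> fin_cases j <;> first | exact absurd rfl hij | assumption
end
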